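/- Let f : [ρ_l, ρ_h] → 𝒞 be a map into the space of nonempty compact subsets of ℂ that is continuous with respect to the Hausdorff metric, where 0 < ρ_l ≤ ρ_h. Then for every ε > 0 there exists δ > 0 such that for every finite partition ρ_l = ρ_0 < ρ_1 < … < ρ_n = ρ_h with max_j (ρ_{j+1} − ρ_j) < δ, the Hausdorff distance between ⋂_{j=0}^{n} f(ρ_j) and ⋂_{ρ ∈ [ρ_l, ρ_h]} f(ρ) is at most ε, provided ⋂_{ρ ∈ [ρ_l, ρ_h]} f(ρ) is nonempty. -/
import Mathlib

open Metric Set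


/-- For a Hausdorff-continuous family `f` of nonempty compact subsets of `ℂ` over
`[ρ_l, ρ_h]`, for every `ε > 0` there is a `δ > 0` such that the intersection over any
partition of granularity `< δ` is within Hausdorff distance `ε` of the full intersection
(assuming the full intersection is nonempty). -/
theorem iInter_partition_hausdorff_approx (ρl ρh : ℝ) (h0 : 0 < ρl) (hlh : ρl ≤ ρh)
    (f : ℝ → Set ℂ)
    (hcomp : ∀ ρ ∈ Set.Icc ρl ρh, IsCompact (f ρ) ∧ (f ρ).Nonempty)
    (hcont : ∀ ρ ∈ Set.Icc ρl ρh, ∀ ε > 0, ∃ δ > 0, ∀ ρ' ∈ Set.Icc ρl ρh,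
      |ρ' - ρ| < δ → Metric.hausdorffDist (f ρ) (f ρ') < ε)
    (hne : (⋂ ρ ∈ Set.Icc ρl ρh, f ρ).Nonempty) :
    ∀ ε > 0, ∃ δ > 0, ∀ (n : ℕ) (ρj : Fin (n + 1) → ℝ),
      ρj 0 = ρl → ρj (Fin.last n) = ρh → StrictMono ρj →
      (∀ i : Fin n, ρj i.succ - ρj i.castSucc < δ) →
      Metric.hausdorffDist (⋂ j, f (ρj j)) (⋂ ρ ∈ Set.Icc ρl ρh, f ρ) ≤ ε := by
  intro ε hε
  set K := ⋂ ρ ∈ Set.Icc ρl ρh, f ρ with hKdef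
  have hρl : ρl ∈ Set.Icc ρl ρh := ⟨le_refl _, hlh⟩
  have hKcl : IsClosed K := isClosed_biInter (fun ρ hρ => (hcomp ρ hρ).1.isClosed)
  have hKsub : K ⊆ f ρl := biInter_subset_of_mem hρl
  have hKcomp : IsCompact K := (hcomp ρl hρl).1.of_isClosed_subset hKcl hKsub
  -- Lemma A : points uniformly close to all f ρ are close to K
  have lemA : ∃ η > 0, ∀ x : ℂ,
      (∀ ρ ∈ Set.Icc ρl ρh, infDist x (f ρ) ≤ η) → infDist x K ≤ ε := by
    by_contra h
    push_neg at h
    have hseq : ∀ n : ℕ, ∃ x : ℂ,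
        (∀ ρ ∈ Set.Icc ρl ρh, infDist x (f ρ) ≤ 1/(n+1)) ∧ ε < infDist x K := by
      intro n
      obtain ⟨x, hx1, hx2⟩ := h (1/(n+1)) (by positivity)
      exact ⟨x, hx1, hx2⟩
    choose u hu1 hu2 using hseq
    obtain ⟨R, hR⟩ := (hcomp ρl hρl).1.isBounded.subset_closedBall 0
    have hub : ∀ n, u n ∈ closedBall (0:ℂ) (R+2) := by
      intro n
      have h1 : infDist (u n) (f ρl) ≤ 1 := by
        refine le_trans (hu1 n ρl hρl) ?_
        rw [div_le_one (by positivity)]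
        linarith [Nat.cast_nonneg (α := ℝ) n]
      obtain ⟨y, hy, hdy⟩ := (infDist_lt_iff (hcomp ρl hρl).2).mp
        (lt_of_le_of_lt h1 one_lt_two)
      have hy0 : dist y 0 ≤ R := hR hy
      have := dist_triangle (u n) y 0
      simp only [mem_closedBall]
      linarith
    obtain ⟨x, -, φ, hφ, hconv⟩ :=
      (isCompact_closedBall (0:ℂ) (R+2)).tendsto_subseq hub
    have hxK : x ∈ K := by
      have hx : ∀ ρ ∈ Set.Icc ρl ρh, x ∈ f ρ := by
        intro ρ hρ
        have hc : Filter.Tendsto (fun n => infDist (u (φ n)) (f ρ))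
            Filter.atTop (nhds (infDist x (f ρ))) :=
          ((continuous_infDist_pt (f ρ)).tendsto x).comp hconv
        have hle : infDist x (f ρ) ≤ 0 := by
          refine le_of_tendsto_of_tendsto' hc tendsto_one_div_add_atTop_nhds_zero_nat ?_
          intro n
          refine le_trans (hu1 (φ n) ρ hρ) ?_
          apply one_div_le_one_div_of_le (by positivity)
          have h' : n + 1 ≤ φ n + 1 := Nat.succ_le_succ hφ.le_apply
          exact_mod_cast h'
        have hnn : 0 ≤ infDist x (f ρ) := infDist_nonneg
        exact ((hcomp ρ hρ).1.isClosed.mem_iff_infDist_zero (hcomp ρ hρ).2).mpr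
          (le_antisymm hle hnn)
      simp only [hKdef, Set.mem_iInter₂]
      exact hx
    have hc : Filter.Tendsto (fun n => infDist (u (φ n)) K)
        Filter.atTop (nhds (infDist x K)) :=
      ((continuous_infDist_pt K).tendsto x).comp hconv
    have : ε ≤ infDist x K :=
      le_of_tendsto_of_tendsto' tendsto_const_nhds hc (fun n => (hu2 (φ n)).le)
    rw [infDist_zero_of_mem hxK] at this
    linarith
  obtain ⟨η, hη, hA⟩ := lemA
  -- Lemma B : uniform continuity style statement
  have lemB : ∃ δ > 0, ∀ ρ ∈ Set.Icc ρl ρh, ∀ ρ' ∈ Set.Icc ρl ρh, |ρ' - ρ| < δ →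
      ∀ x ∈ f ρ', infDist x (f ρ) ≤ η := by
    have hpick : ∀ ρ ∈ Set.Icc ρl ρh, ∃ δ > 0, ∀ ρ' ∈ Set.Icc ρl ρh,
        |ρ' - ρ| < δ → Metric.hausdorffDist (f ρ) (f ρ') < η/2 :=
      fun ρ hρ => hcont ρ hρ (η/2) (by positivity)
    choose! D hD1 hD2 using hpick
    have hcover : Set.Icc ρl ρh ⊆ ⋃ ρ ∈ Set.Icc ρl ρh, ball ρ (D ρ / 2) := by
      intro ρ hρ
      exact Set.mem_biUnion hρ (mem_ball_self (by linarith [hD1 ρ hρ]))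
    obtain ⟨b, hbsub, hbfin, hbcov⟩ := isCompact_Icc.elim_finite_subcover_image
      (fun ρ hρ => isOpen_ball) hcover
    have hbne : b.Nonempty := by
      obtain ⟨ρ₀, hρ₀, -⟩ := Set.mem_iUnion₂.mp (hbcov hρl)
      exact ⟨ρ₀, hρ₀⟩
    set t := hbfin.toFinset with ht
    have htne : t.Nonempty := by simpa [ht] using hbne
    refine ⟨t.inf' htne (fun ρ => D ρ / 2), ?_, ?_⟩
    · rw [gt_iff_lt, Finset.lt_inf'_iff]
      intro ρ hρ
      have : ρ ∈ b := hbfin.mem_toFinset.mp hρ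
      linarith [hD1 ρ (hbsub this)]
    · intro ρ hρ ρ' hρ' hd x hx
      obtain ⟨ρ₀, hρ₀b, hρ₀⟩ := Set.mem_iUnion₂.mp (hbcov hρ)
      have hρ₀t : ρ₀ ∈ t := hbfin.mem_toFinset.mpr hρ₀b
      have hρ₀I : ρ₀ ∈ Set.Icc ρl ρh := hbsub hρ₀b
      have hDρ₀ : 0 < D ρ₀ := hD1 ρ₀ hρ₀I
      have h1 : |ρ - ρ₀| < D ρ₀ / 2 := by
        rw [← Real.dist_eq]; exact mem_ball.mp hρ₀
      have hδle : t.inf' htne (fun ρ => D ρ / 2) ≤ D ρ₀ / 2 :=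
        Finset.inf'_le _ hρ₀t
      have h2 : |ρ' - ρ₀| < D ρ₀ := by
        have := abs_sub_le ρ' ρ ρ₀
        linarith [lt_of_lt_of_le hd hδle]
      have hH1 : Metric.hausdorffDist (f ρ₀) (f ρ) < η/2 := hD2 ρ₀ hρ₀I ρ hρ (by linarith)
      have hH2 : Metric.hausdorffDist (f ρ₀) (f ρ') < η/2 := hD2 ρ₀ hρ₀I ρ' hρ' h2
      have hne1 : EMetric.hausdorffEdist (f ρ') (f ρ₀) ≠ ⊤ :=
        hausdorffEdist_ne_top_of_nonempty_of_bounded (hcomp ρ' hρ').2 (hcomp ρ₀ hρ₀I).2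
          (hcomp ρ' hρ').1.isBounded (hcomp ρ₀ hρ₀I).1.isBounded
      have hne2 : EMetric.hausdorffEdist (f ρ₀) (f ρ) ≠ ⊤ :=
        hausdorffEdist_ne_top_of_nonempty_of_bounded (hcomp ρ₀ hρ₀I).2 (hcomp ρ hρ).2
          (hcomp ρ₀ hρ₀I).1.isBounded (hcomp ρ hρ).1.isBounded
      have e1 : infDist x (f ρ₀) ≤ Metric.hausdorffDist (f ρ') (f ρ₀) :=
        infDist_le_hausdorffDist_of_mem hx hne1
      have e2 : infDist x (f ρ) ≤ infDist x (f ρ₀) + Metric.hausdorffDist (f ρ₀) (f ρ) :=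
        infDist_le_infDist_add_hausdorffDist hne2
      rw [hausdorffDist_comm] at e1
      linarith
  obtain ⟨δ, hδ, hB⟩ := lemB
  refine ⟨δ, hδ, ?_⟩
  intro n ρj hρ0 hρn hmono hgran
  have hρjI : ∀ j, ρj j ∈ Set.Icc ρl ρh := by
    intro j
    constructor
    · rw [← hρ0]; exact hmono.monotone (Fin.zero_le j)
    · rw [← hρn]; exact hmono.monotone (Fin.le_last j)
  set P := ⋂ j, f (ρj j) with hPdef
  have hKP : K ⊆ P := by
    intro x hx
    simp only [hPdef, Set.mem_iInter]
    intro j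
    exact Set.mem_iInter₂.mp hx (ρj j) (hρjI j)
  -- Any ρ in Icc is within δ of a partition point
  have hnear : ∀ ρ ∈ Set.Icc ρl ρh, ∃ j, |ρ - ρj j| < δ := by
    intro ρ hρ
    set S := Finset.univ.filter (fun i : Fin (n+1) => ρj i ≤ ρ) with hS
    have hSne : S.Nonempty := ⟨0, by simp [hS, hρ0, hρ.1]⟩
    set j := S.max' hSne with hj
    have hjS : j ∈ S := S.max'_mem hSne
    have hjle : ρj j ≤ ρ := by simpa [hS] using (Finset.mem_filter.mp hjS).2
    by_cases hjl : j = Fin.last n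
    · refine ⟨j, ?_⟩
      have : ρ ≤ ρj j := by rw [hjl, hρn]; exact hρ.2
      rw [abs_of_nonneg (by linarith)]
      linarith
    · have hjlt : (j : ℕ) < n := by
        rcases lt_or_eq_of_le (Nat.lt_succ_iff.mp j.isLt) with h | h
        · exact h
        · exact absurd (Fin.ext h) hjl
      set i : Fin n := ⟨(j : ℕ), hjlt⟩ with hi
      have hcast : i.castSucc = j := by simp [hi, Fin.ext_iff]
      have hnotin : i.succ ∉ S := by
        intro hmem
        have := S.le_max' _ hmem
        rw [← hj] at this
        have : (i.succ : Fin (n+1)) ≤ i.castSucc := hcast ▸ this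
        exact absurd this (by simp [Fin.lt_iff_val_lt_val, Fin.le_iff_val_le_val, hi])
      have hlt : ρ < ρj i.succ := by
        by_contra hc
        exact hnotin (by simp [hS]; linarith [not_lt.mp hc])
      refine ⟨j, ?_⟩
      rw [abs_of_nonneg (by linarith)]
      have := hgran i
      rw [hcast] at this
      linarith
  -- every point of P is within ε of K
  have hPK : ∀ x ∈ P, infDist x K ≤ ε := by
    intro x hx
    apply hA
    intro ρ hρ
    obtain ⟨j, hjd⟩ := hnear ρ hρ
    exact hB ρ hρ (ρj j) (hρjI j) (by rwa [abs_sub_comm]) x (Set.mem_iInter.mp hx j)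
  apply hausdorffDist_le_of_mem_dist hε.le
  · intro x hx
    obtain ⟨y, hy, hdy⟩ := hKcomp.exists_infDist_eq_dist hne x
    exact ⟨y, hy, by rw [← hdy]; exact hPK x hx⟩
  · intro x hx
    exact ⟨x, hKP hx, by simp [hε.le]⟩
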